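/- Let X : [0,T) × ℝ → ℝ² be a smooth family of closed curves evolving by the area-preserving mean-curvature flow, i.e. whose normal velocity satisfies ∂ₜX(t,u) · n(t,u) = −κ(t,u) + (1/L(t)) ∫₀¹ κ(t,w) |∂ᵤX(t,w)| dw for all (t,u), and assume A(0) > 0. Then the isoperimetric ratio t ↦ L(t)² / (4π A(t)) is non-increasing on [0,T). -/

import Mathlib

/-!
Along the flow the normal velocity is `κ̄ - κ`, where `κ̄ = L⁻¹ ∫ κ ds` is the average curvature.
The first variation formulas give `A' = ∫ (κ̄ - κ) ds = 0` and
`L' = ∫ κ (κ̄ - κ) ds = -∫ (κ - κ̄)² ds ≤ 0`. Hence `A` stays equal to `A(0) > 0` while `L`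
decreases, and so does `L² / (4πA)`.
-/

open Set MeasureTheory Real Filter
open scoped RealInnerProductSpace

noncomputable section

abbrev E2 : Type := EuclideanSpace ℝ (Fin 2)

def perp (p : E2) : E2 := (WithLp.equiv 2 (Fin 2 → ℝ)).symm ![p 1, -(p 0)]

def unitNormal (Y : ℝ → E2) (u : ℝ) : E2 := ‖deriv Y u‖⁻¹ • perp (deriv Y u)

def curvature (Y : ℝ → E2) (u : ℝ) : ℝ :=
  -(‖deriv Y u‖⁻¹ * ⟪deriv (fun v => ‖deriv Y v‖⁻¹ • deriv Y v) u, unitNormal Y u⟫)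

def curveLength (Y : ℝ → E2) : ℝ := ∫ u in (0:ℝ)..1, ‖deriv Y u‖

def enclosedArea (Y : ℝ → E2) : ℝ := (1/2) * ∫ u in (0:ℝ)..1, ⟪Y u, perp (deriv Y u)⟫

def IsSmoothClosedCurve (Y : ℝ → E2) : Prop :=
  ContDiff ℝ 2 Y ∧ (∀ u, Y (u + 1) = Y u) ∧ ∀ u, deriv Y u ≠ 0

def IsSmoothClosedFamily (T : ℝ) (X : ℝ → ℝ → E2) : Prop :=
  ContDiffOn ℝ 2 (fun p : ℝ × ℝ => X p.1 p.2) (Ico 0 T ×ˢ univ) ∧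
  ∀ t ∈ Ico 0 T, IsSmoothClosedCurve (X t)

open Function Topology

theorem continuousOn_parametric_intervalIntegral_of_continuousOn {X E : Type*}
    [TopologicalSpace X] [NormedAddCommGroup E] [NormedSpace ℝ E] {F : X → ℝ → E} {s : Set X}
    (hF : ContinuousOn (uncurry F) (s ×ˢ univ)) (a b : ℝ) :
    ContinuousOn (fun x => ∫ u in a..b, F x u) s := by
  rw [continuousOn_iff_continuous_domRestrict]
  have hF' : Continuous (uncurry fun (x : s) u => F x u) :=
    hF.comp_continuous (continuous_subtype_val.prodMap continuous_id) fun p => ⟨p.1.2, trivial⟩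
  exact intervalIntegral.continuous_parametric_intervalIntegral_of_continuous' hF' a b

theorem hasDerivAt_parametric_intervalIntegral_of_continuousOn {E : Type*}
    [NormedAddCommGroup E] [NormedSpace ℝ E] {F F' : ℝ → ℝ → E} {s : Set ℝ} {t₀ : ℝ}
    (hs : IsOpen s) (ht₀ : t₀ ∈ s) (hF : ContinuousOn (uncurry F) (s ×ˢ univ))
    (hF' : ContinuousOn (uncurry F') (s ×ˢ univ))
    (hderiv : ∀ t ∈ s, ∀ u, HasDerivAt (F · u) (F' t u) t) (a b : ℝ) :
    HasDerivAt (fun t => ∫ u in a..b, F t u) (∫ u in a..b, F' t₀ u) t₀ := by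
  obtain ⟨ε, hε, hball⟩ := Metric.isOpen_iff.1 hs t₀ ht₀
  have hK : Metric.closedBall t₀ (ε / 2) ×ˢ uIcc a b ⊆ s ×ˢ univ :=
    prod_mono ((Metric.closedBall_subset_ball (half_lt_self hε)).trans hball) (subset_univ _)
  obtain ⟨M, hM⟩ := ((isCompact_closedBall t₀ _).prod isCompact_uIcc).exists_bound_of_continuousOn
    (hF'.mono hK)
  have hslice : ∀ {G : ℝ → ℝ → E}, ContinuousOn (uncurry G) (s ×ˢ univ) →
      ∀ t ∈ s, Continuous (G t) := fun hG t ht =>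
    hG.comp_continuous (Continuous.prodMk_right t) fun _ => ⟨ht, trivial⟩
  refine (intervalIntegral.hasDerivAt_integral_of_dominated_loc_of_deriv_le (bound := fun _ => M)
    (Metric.ball_mem_nhds t₀ (half_pos hε)) ?_ ((hslice hF t₀ ht₀).intervalIntegrable a b)
    (hslice hF' t₀ ht₀).aestronglyMeasurable ?_ intervalIntegrable_const ?_).2
  · filter_upwards [hs.mem_nhds ht₀] with t ht
    exact (hslice hF t ht).aestronglyMeasurable
  · exact ae_of_all _ fun u hu t ht =>
      hM (t, u) ⟨Metric.ball_subset_closedBall ht, uIoc_subset_uIcc hu⟩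
  · exact ae_of_all _ fun u _ t ht =>
      hderiv t (hball (Metric.ball_subset_ball (half_le_self hε.le) ht)) u

theorem antitoneOn_Ico_of_hasDerivAt_nonpos {f f' : ℝ → ℝ} {a b : ℝ}
    (hf : ContinuousOn f (Ico a b)) (hderiv : ∀ x ∈ Ioo a b, HasDerivAt f (f' x) x)
    (hf' : ∀ x ∈ Ioo a b, f' x ≤ 0) : AntitoneOn f (Ico a b) :=
  antitoneOn_of_deriv_nonpos (convex_Ico a b) hf
    (by rw [interior_Ico]; exact fun x hx => (hderiv x hx).differentiableAt.differentiableWithinAt)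
    (by rw [interior_Ico]; exact fun x hx => (hderiv x hx).deriv ▸ hf' x hx)

theorem eq_of_hasDerivAt_zero_on_Ioo {f : ℝ → ℝ} {a b : ℝ} (hf : ContinuousOn f (Ico a b))
    (hderiv : ∀ x ∈ Ioo a b, HasDerivAt f 0 x) {x : ℝ} (hx : x ∈ Ico a b) : f x = f a := by
  have ha : a ∈ Ico a b := ⟨le_rfl, hx.1.trans_lt hx.2⟩
  refine le_antisymm (antitoneOn_Ico_of_hasDerivAt_nonpos hf hderiv (fun _ _ => le_rfl) ha hx hx.1)
    (neg_le_neg_iff.1 ?_)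
  exact antitoneOn_Ico_of_hasDerivAt_nonpos hf.neg (fun y hy => (hderiv y hy).neg)
    (fun _ _ => neg_zero.le) ha hx hx.1

section TwoParameter

variable {E : Type*} [NormedAddCommGroup E] [NormedSpace ℝ E] {f : ℝ → ℝ → E} {t u : ℝ}

theorem hasDerivAt_prodMk_left (t u : ℝ) :
    HasDerivAt (fun s : ℝ => (s, u)) ((1 : ℝ), (0 : ℝ)) t :=
  (hasDerivAt_id t).prodMk (hasDerivAt_const t u)

theorem hasDerivAt_prodMk_right (t u : ℝ) :
    HasDerivAt (fun v : ℝ => (t, v)) ((0 : ℝ), (1 : ℝ)) u :=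
  (hasDerivAt_const u t).prodMk (hasDerivAt_id u)

theorem DifferentiableAt.hasDerivAt_uncurry_fst (hf : DifferentiableAt ℝ (uncurry f) (t, u)) :
    HasDerivAt (fun s => f s u) (fderiv ℝ (uncurry f) (t, u) (1, 0)) t :=
  (hf.hasFDerivAt.comp_hasDerivAt t (hasDerivAt_prodMk_left t u) :)

theorem DifferentiableAt.hasDerivAt_uncurry_snd (hf : DifferentiableAt ℝ (uncurry f) (t, u)) :
    HasDerivAt (f t) (fderiv ℝ (uncurry f) (t, u) (0, 1)) u :=
  (hf.hasFDerivAt.comp_hasDerivAt u (hasDerivAt_prodMk_right t u) :)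

theorem continuousOn_deriv_snd_of_contDiffOn {s : Set ℝ} (hs : UniqueDiffOn ℝ s)
    (hf : ContDiffOn ℝ 1 (uncurry f) (s ×ˢ univ)) :
    ContinuousOn (fun p => deriv (f p.1) p.2) (s ×ˢ univ) := by
  refine ((hf.continuousOn_fderivWithin (hs.prod uniqueDiffOn_univ) le_rfl).clm_apply
    (continuousOn_const (c := ((0 : ℝ), (1 : ℝ))))).congr ?_
  rintro ⟨t, u⟩ ⟨ht, -⟩
  have h := (hf.differentiableOn one_ne_zero (t, u) ⟨ht, trivial⟩).hasFDerivWithinAt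
    |>.comp_hasDerivWithinAt u (hasDerivAt_prodMk_right t u).hasDerivWithinAt
      (fun v _ => ⟨ht, trivial⟩ : MapsTo (fun v => (t, v)) univ (s ×ˢ univ))
  exact (hasDerivWithinAt_univ.1 h).deriv

variable {U : Set (ℝ × ℝ)}

theorem continuousOn_deriv_fst_of_contDiffOn (hU : IsOpen U)
    (hf : ContDiffOn ℝ 1 (uncurry f) U) :
    ContinuousOn (fun p => deriv (fun s => f s p.2) p.1) U :=
  ((hf.continuousOn_fderiv_of_isOpen hU le_rfl).clm_apply
    (continuousOn_const (c := ((1 : ℝ), (0 : ℝ))))).congr fun p hp =>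
    ((hf.differentiableOn one_ne_zero p hp).differentiableAt
      (hU.mem_nhds hp)).hasDerivAt_uncurry_fst.deriv

def mixedDeriv (f : ℝ → ℝ → E) (p : ℝ × ℝ) : E :=
  fderiv ℝ (fderiv ℝ (uncurry f)) p (1, 0) (0, 1)

variable (hU : IsOpen U) (hf : ContDiffOn ℝ 2 (uncurry f) U)
include hU hf

theorem contDiffOn_fderiv_uncurry : ContDiffOn ℝ 1 (fderiv ℝ (uncurry f)) U :=
  hf.fderiv_of_isOpen hU one_add_one_eq_two.le

theorem continuousOn_mixedDeriv : ContinuousOn (mixedDeriv f) U :=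
  (((contDiffOn_fderiv_uncurry hU hf).continuousOn_fderiv_of_isOpen hU le_rfl).clm_apply
    continuousOn_const).clm_apply continuousOn_const

theorem hasFDerivAt_fderiv_uncurry {p : ℝ × ℝ} (hp : p ∈ U) :
    HasFDerivAt (fderiv ℝ (uncurry f)) (fderiv ℝ (fderiv ℝ (uncurry f)) p) p :=
  (((contDiffOn_fderiv_uncurry hU hf).differentiableOn one_ne_zero p hp).differentiableAt
    (hU.mem_nhds hp)).hasFDerivAt

theorem eventually_deriv_fst_eq (hp : (t, u) ∈ U) :
    ∀ᶠ x in 𝓝 (t, u), deriv (fun s => f s x.2) x.1 = fderiv ℝ (uncurry f) x (1, 0) := by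
  filter_upwards [hU.mem_nhds hp] with x hx
  exact ((hf.differentiableOn two_ne_zero x hx).differentiableAt
    (hU.mem_nhds hx)).hasDerivAt_uncurry_fst.deriv

theorem eventually_deriv_snd_eq (hp : (t, u) ∈ U) :
    ∀ᶠ x in 𝓝 (t, u), deriv (f x.1) x.2 = fderiv ℝ (uncurry f) x (0, 1) := by
  filter_upwards [hU.mem_nhds hp] with x hx
  exact ((hf.differentiableOn two_ne_zero x hx).differentiableAt
    (hU.mem_nhds hx)).hasDerivAt_uncurry_snd.deriv

theorem hasDerivAt_deriv_snd (hp : (t, u) ∈ U) :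
    HasDerivAt (fun s => deriv (f s) u) (mixedDeriv f (t, u)) t := by
  have h : HasDerivAt (fun s => fderiv ℝ (uncurry f) (s, u))
      (fderiv ℝ (fderiv ℝ (uncurry f)) (t, u) (1, 0)) t :=
    ((hasFDerivAt_fderiv_uncurry hU hf hp).comp_hasDerivAt t (hasDerivAt_prodMk_left t u) :)
  have h' := h.clm_apply (hasDerivAt_const t ((0 : ℝ), (1 : ℝ)))
  rw [map_zero, add_zero] at h'
  exact h'.congr_of_eventuallyEq
    ((hasDerivAt_prodMk_left t u).continuousAt.eventually (eventually_deriv_snd_eq hU hf hp))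

theorem hasDerivAt_deriv_fst (hp : (t, u) ∈ U) :
    HasDerivAt (fun v => deriv (fun s => f s v) t) (mixedDeriv f (t, u)) u := by
  have h : HasDerivAt (fun v => fderiv ℝ (uncurry f) (t, v))
      (fderiv ℝ (fderiv ℝ (uncurry f)) (t, u) (0, 1)) u :=
    ((hasFDerivAt_fderiv_uncurry hU hf hp).comp_hasDerivAt u (hasDerivAt_prodMk_right t u) :)
  have h' := h.clm_apply (hasDerivAt_const u ((1 : ℝ), (0 : ℝ)))
  rw [map_zero, add_zero,
    (hf.contDiffAt (hU.mem_nhds hp)).isSymmSndFDerivAt (by simp) (0, 1) (1, 0)] at h'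
  exact h'.congr_of_eventuallyEq
    ((hasDerivAt_prodMk_right t u).continuousAt.eventually (eventually_deriv_fst_eq hU hf hp))

end TwoParameter

@[simp] theorem perp_apply_zero (p : E2) : perp p 0 = p 1 := rfl

@[simp] theorem perp_apply_one (p : E2) : perp p 1 = -p 0 := rfl

theorem inner_E2 (a b : E2) : ⟪a, b⟫ = a 0 * b 0 + a 1 * b 1 := by
  simp [PiLp.inner_apply, Fin.sum_univ_two, mul_comm]

theorem E2.ext_iff {p q : E2} : p = q ↔ p 0 = q 0 ∧ p 1 = q 1 := by
  refine ⟨fun h => h ▸ ⟨rfl, rfl⟩, fun ⟨h0, h1⟩ => ?_⟩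
  ext i; fin_cases i <;> assumption

def perpL : E2 →L[ℝ] E2 :=
  LinearMap.toContinuousLinearMap
    { toFun := perp
      map_add' := fun p q => E2.ext_iff.2 ⟨rfl, by simp; ring⟩
      map_smul' := fun c p => E2.ext_iff.2 ⟨rfl, by simp⟩ }

@[simp] theorem perpL_apply (p : E2) : perpL p = perp p := rfl

theorem inner_perp_swap (a b : E2) : ⟪a, perp b⟫ = -⟪b, perp a⟫ := by
  simp only [inner_E2, perp_apply_zero, perp_apply_one]; ring

theorem eq_inner_perp_smul_perp {τ p : E2} (hτ : ‖τ‖ = 1) (hp : ⟪p, τ⟫ = 0) :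
    p = ⟪p, perp τ⟫ • perp τ := by
  have hτ' : τ 0 * τ 0 + τ 1 * τ 1 = 1 := by
    rw [← inner_E2, real_inner_self_eq_norm_sq, hτ, one_pow]
  rw [inner_E2] at hp
  refine E2.ext_iff.2 ⟨?_, ?_⟩ <;> simp only [PiLp.smul_apply, smul_eq_mul, inner_E2,
    perp_apply_zero, perp_apply_one]
  · linear_combination (-(p 0)) * hτ' + τ 0 * hp
  · linear_combination (-(p 1)) * hτ' + τ 1 * hp

theorem inner_deriv_self_eq_zero_of_norm_eq_one {F : Type*} [NormedAddCommGroup F]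
    [InnerProductSpace ℝ F] {f : ℝ → F} {f' : F} {u : ℝ} (hf : HasDerivAt f f' u)
    (hnorm : ∀ x, ‖f x‖ = 1) : ⟪f', f u⟫ = 0 := by
  have h := hf.norm_sq.unique (by simpa [hnorm] using hasDerivAt_const u (1 : ℝ))
  rw [real_inner_comm]
  linarith

theorem HasDerivAt.norm_of_ne_zero {F : Type*} [NormedAddCommGroup F]
    [InnerProductSpace ℝ F] {f : ℝ → F} {f' : F} {u : ℝ} (hf : HasDerivAt f f' u)
    (h0 : f u ≠ 0) : HasDerivAt (fun x => ‖f x‖) ⟪f', ‖f u‖⁻¹ • f u⟫ u := by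
  have h := (hf.norm_sq.sqrt (by simpa using h0))
  simp only [sqrt_sq (norm_nonneg _)] at h
  convert h using 1
  rw [real_inner_smul_right, real_inner_comm]
  field_simp

theorem integral_inner_deriv_eq_neg {F : Type*} [NormedAddCommGroup F] [InnerProductSpace ℝ F]
    {f g f' g' : ℝ → F} {a b : ℝ} (hf : ∀ x, HasDerivAt f (f' x) x)
    (hg : ∀ x, HasDerivAt g (g' x) x) (hf' : Continuous f') (hg' : Continuous g')
    (hab : ⟪f b, g b⟫ = ⟪f a, g a⟫) :
    ∫ x in a..b, ⟪f' x, g x⟫ = -∫ x in a..b, ⟪f x, g' x⟫ := by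
  have hfc : Continuous f := continuous_iff_continuousAt.2 fun x => (hf x).continuousAt
  have hgc : Continuous g := continuous_iff_continuousAt.2 fun x => (hg x).continuousAt
  have h := intervalIntegral.integral_eq_sub_of_hasDerivAt (fun x _ => (hf x).inner ℝ (hg x))
    (((hfc.inner hg').add (hf'.inner hgc)).intervalIntegrable a b)
  rw [hab, sub_self, intervalIntegral.integral_add ((hfc.inner hg').intervalIntegrable a b)
    ((hf'.inner hgc).intervalIntegrable a b)] at h
  linarith

theorem integral_mul_mul_sub_nonpos_of_weighted_mean {k r : ℝ → ℝ} {a b c : ℝ} (hab : a ≤ b)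
    (hk : Continuous k) (hr : Continuous r) (hr0 : ∀ u, 0 ≤ r u)
    (hc : c * ∫ u in a..b, r u = ∫ u in a..b, k u * r u) :
    ∫ u in a..b, k u * r u * (c - k u) ≤ 0 := by
  have hint : ∀ g : ℝ → ℝ, Continuous g → IntervalIntegrable g volume a b :=
    fun _ hg => hg.intervalIntegrable a b
  have hmean : ∫ u in a..b, (k u - c) * r u = 0 := by
    simp_rw [sub_mul]
    rw [intervalIntegral.integral_sub (hint _ (by fun_prop)) (hint _ (by fun_prop)),
      intervalIntegral.integral_const_mul, hc, sub_self]
  have hsplit : ∀ u, k u * r u * (c - k u) = -((k u - c) ^ 2 * r u) - c * ((k u - c) * r u) :=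
    fun u => by ring
  simp_rw [hsplit]
  rw [intervalIntegral.integral_sub (hint _ (by fun_prop)) (hint _ (by fun_prop)),
    intervalIntegral.integral_neg, intervalIntegral.integral_const_mul, hmean, mul_zero, sub_zero,
    neg_nonpos]
  exact intervalIntegral.integral_nonneg hab fun u _ => mul_nonneg (sq_nonneg _) (hr0 u)

def unitTangent (Y : ℝ → E2) (u : ℝ) : E2 := ‖deriv Y u‖⁻¹ • deriv Y u

theorem unitNormal_eq_perp_unitTangent (Y : ℝ → E2) (u : ℝ) :
    unitNormal Y u = perp (unitTangent Y u) :=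
  (perpL.map_smul _ _).symm

theorem curvature_eq_inner_deriv_unitTangent (Y : ℝ → E2) (u : ℝ) :
    curvature Y u = -(‖deriv Y u‖⁻¹ * ⟪deriv (unitTangent Y) u, unitNormal Y u⟫) := rfl

namespace IsSmoothClosedCurve

variable {Y : ℝ → E2} (hY : IsSmoothClosedCurve Y)
include hY

theorem contDiff_deriv : ContDiff ℝ 1 (deriv Y) := hY.1.deriv'

theorem deriv_add_one (u : ℝ) : deriv Y (u + 1) = deriv Y u := by
  rw [← deriv_comp_add_const, funext hY.2.1]

theorem apply_one : Y 1 = Y 0 := by simpa using hY.2.1 0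

theorem norm_deriv_pos (u : ℝ) : 0 < ‖deriv Y u‖ := norm_pos_iff.2 (hY.2.2 u)

theorem norm_unitTangent (u : ℝ) : ‖unitTangent Y u‖ = 1 := by
  rw [unitTangent, norm_smul, norm_inv, norm_norm, inv_mul_cancel₀ (hY.norm_deriv_pos u).ne']

theorem contDiff_unitTangent : ContDiff ℝ 1 (unitTangent Y) :=
  ((hY.contDiff_deriv.norm ℝ hY.2.2).inv fun u => (hY.norm_deriv_pos u).ne').smul
    hY.contDiff_deriv

theorem hasDerivAt_unitTangent (u : ℝ) :
    HasDerivAt (unitTangent Y) (-(curvature Y u * ‖deriv Y u‖) • unitNormal Y u) u := by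
  have hd := (hY.contDiff_unitTangent.differentiable one_ne_zero u).hasDerivAt
  refine hd.congr_deriv ?_
  rw [curvature_eq_inner_deriv_unitTangent, neg_mul, neg_neg, mul_right_comm,
    inv_mul_cancel₀ (hY.norm_deriv_pos u).ne', one_mul, unitNormal_eq_perp_unitTangent]
  exact eq_inner_perp_smul_perp (hY.norm_unitTangent u)
    (inner_deriv_self_eq_zero_of_norm_eq_one hd hY.norm_unitTangent)

theorem continuous_unitNormal : Continuous (unitNormal Y) := by
  rw [funext (unitNormal_eq_perp_unitTangent Y)]
  exact perpL.continuous.comp hY.contDiff_unitTangent.continuous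

theorem continuous_curvature : Continuous (curvature Y) := by
  simp only [funext (curvature_eq_inner_deriv_unitTangent Y)]
  exact ((hY.contDiff_deriv.continuous.norm.inv₀ fun u => (hY.norm_deriv_pos u).ne').mul
    ((hY.contDiff_unitTangent.continuous_deriv le_rfl).inner hY.continuous_unitNormal)).neg

theorem curveLength_pos : 0 < curveLength Y :=
  intervalIntegral.intervalIntegral_pos_of_pos_on
    (hY.contDiff_deriv.continuous.norm.intervalIntegrable 0 1)
    (fun u _ => hY.norm_deriv_pos u) zero_lt_one

theorem unitTangent_one : unitTangent Y 1 = unitTangent Y 0 := by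
  rw [unitTangent, unitTangent, ← zero_add 1, hY.deriv_add_one]

theorem perp_deriv_eq (u : ℝ) : perp (deriv Y u) = ‖deriv Y u‖ • unitNormal Y u := by
  rw [unitNormal, smul_smul, mul_inv_cancel₀ (hY.norm_deriv_pos u).ne', one_smul]

variable {V W : ℝ → E2} (hV : ∀ u, HasDerivAt V (W u) u) (hW : Continuous W) (hV1 : V 1 = V 0)
include hV hW hV1

/-- First variation of length: integrate by parts against `τ' = -κ |Y'| n`. -/
theorem integral_inner_unitTangent_eq :
    ∫ u in (0 : ℝ)..1, ⟪W u, unitTangent Y u⟫ =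
      ∫ u in (0 : ℝ)..1, curvature Y u * ‖deriv Y u‖ * ⟪V u, unitNormal Y u⟫ := by
  have hcont : Continuous fun u => -(curvature Y u * ‖deriv Y u‖) • unitNormal Y u :=
    (hY.continuous_curvature.mul hY.contDiff_deriv.continuous.norm).neg.smul
      hY.continuous_unitNormal
  rw [integral_inner_deriv_eq_neg hV hY.hasDerivAt_unitTangent hW hcont
    (by rw [hV1, hY.unitTangent_one]), ← intervalIntegral.integral_neg]
  congr 1; funext u
  rw [real_inner_smul_right]; ring

/-- First variation of `2A`: integrating `⟪Y, W^⊥⟫` by parts turns it into `⟪V, Y'^⊥⟫`. -/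
theorem integral_inner_perp_add_eq :
    ∫ u in (0 : ℝ)..1, (⟪Y u, perp (W u)⟫ + ⟪V u, perp (deriv Y u)⟫) =
      2 * ∫ u in (0 : ℝ)..1, ‖deriv Y u‖ * ⟪V u, unitNormal Y u⟫ := by
  have hVc : Continuous V := continuous_iff_continuousAt.2 fun u => (hV u).continuousAt
  have hdc := hY.contDiff_deriv.continuous
  have hparts : ∫ u in (0 : ℝ)..1, ⟪perp (W u), Y u⟫ =
      -∫ u in (0 : ℝ)..1, ⟪perp (V u), deriv Y u⟫ :=
    integral_inner_deriv_eq_neg (fun u => perpL.hasFDerivAt.comp_hasDerivAt u (hV u))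
      (fun u => (hY.1.differentiable two_ne_zero u).hasDerivAt) (perpL.continuous.comp hW) hdc
      (by simp only [hV1, hY.apply_one])
  have hYW : ∫ u in (0 : ℝ)..1, ⟪Y u, perp (W u)⟫ =
      ∫ u in (0 : ℝ)..1, ⟪V u, perp (deriv Y u)⟫ := by
    rw [intervalIntegral.integral_congr fun u _ => real_inner_comm (perp (W u)) (Y u), hparts,
      ← intervalIntegral.integral_neg]
    refine intervalIntegral.integral_congr fun u _ => ?_
    simp only [real_inner_comm (deriv Y u), inner_perp_swap (deriv Y u), neg_neg]
  rw [intervalIntegral.integral_add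
    ((hY.1.continuous.inner (perpL.continuous.comp hW)).intervalIntegrable 0 1)
    ((hVc.inner (perpL.continuous.comp hdc)).intervalIntegrable 0 1), hYW, ← two_mul]
  simp_rw [hY.perp_deriv_eq, real_inner_smul_right]

end IsSmoothClosedCurve

namespace IsSmoothClosedFamily

variable {T t : ℝ} {X : ℝ → ℝ → E2} (hX : IsSmoothClosedFamily T X)
include hX

theorem continuousOn_deriv :
    ContinuousOn (fun p : ℝ × ℝ => deriv (X p.1) p.2) (Ico 0 T ×ˢ univ) :=
  continuousOn_deriv_snd_of_contDiffOn (uniqueDiffOn_Ico 0 T) (hX.1.of_le one_le_two)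

theorem continuousOn_unitTangent :
    ContinuousOn (fun p : ℝ × ℝ => unitTangent (X p.1) p.2) (Ico 0 T ×ˢ univ) :=
  (hX.continuousOn_deriv.norm.inv₀ fun p hp => ((hX.2 p.1 hp.1).norm_deriv_pos p.2).ne').smul
    hX.continuousOn_deriv

theorem continuousOn_curveLength : ContinuousOn (fun t => curveLength (X t)) (Ico 0 T) :=
  continuousOn_parametric_intervalIntegral_of_continuousOn (F := fun t u => ‖deriv (X t) u‖)
    hX.continuousOn_deriv.norm 0 1

theorem continuousOn_enclosedArea : ContinuousOn (fun t => enclosedArea (X t)) (Ico 0 T) :=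
  continuousOn_const.mul (continuousOn_parametric_intervalIntegral_of_continuousOn
    (F := fun t u => ⟪X t u, perp (deriv (X t) u)⟫)
    (hX.1.continuousOn.inner (perpL.continuous.comp_continuousOn hX.continuousOn_deriv)) 0 1)

theorem contDiffOn_interior : ContDiffOn ℝ 2 (uncurry X) (Ioo 0 T ×ˢ univ) :=
  hX.1.mono (prod_mono Ioo_subset_Ico_self subset_rfl)

theorem continuousOn_mixedDeriv : ContinuousOn (mixedDeriv X) (Ioo 0 T ×ˢ univ) :=
  _root_.continuousOn_mixedDeriv (isOpen_Ioo.prod isOpen_univ) hX.contDiffOn_interior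

theorem continuousOn_velocity :
    ContinuousOn (fun p : ℝ × ℝ => deriv (fun s => X s p.2) p.1) (Ioo 0 T ×ˢ univ) :=
  continuousOn_deriv_fst_of_contDiffOn (isOpen_Ioo.prod isOpen_univ)
    (hX.contDiffOn_interior.of_le one_le_two)

theorem hasDerivAt_time (ht : t ∈ Ioo 0 T) (u : ℝ) :
    HasDerivAt (fun s => X s u) (deriv (fun s => X s u) t) t :=
  (hX.contDiffOn_interior.differentiableOn two_ne_zero (t, u) ⟨ht, trivial⟩).differentiableAt
    ((isOpen_Ioo.prod isOpen_univ).mem_nhds ⟨ht, trivial⟩)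
    |>.hasDerivAt_uncurry_fst.differentiableAt.hasDerivAt

theorem hasDerivAt_deriv_time (ht : t ∈ Ioo 0 T) (u : ℝ) :
    HasDerivAt (fun s => deriv (X s) u) (mixedDeriv X (t, u)) t :=
  hasDerivAt_deriv_snd (isOpen_Ioo.prod isOpen_univ) hX.contDiffOn_interior ⟨ht, trivial⟩

theorem hasDerivAt_velocity (ht : t ∈ Ioo 0 T) (u : ℝ) :
    HasDerivAt (fun v => deriv (fun s => X s v) t) (mixedDeriv X (t, u)) u :=
  hasDerivAt_deriv_fst (isOpen_Ioo.prod isOpen_univ) hX.contDiffOn_interior ⟨ht, trivial⟩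

theorem continuous_mixedDeriv (ht : t ∈ Ioo 0 T) : Continuous fun u => mixedDeriv X (t, u) :=
  hX.continuousOn_mixedDeriv.comp_continuous (Continuous.prodMk_right t) fun _ => ⟨ht, trivial⟩

theorem velocity_one (ht : t ∈ Ioo 0 T) :
    deriv (fun s => X s 1) t = deriv (fun s => X s 0) t := by
  refine Filter.EventuallyEq.deriv_eq ?_
  filter_upwards [isOpen_Ioo.mem_nhds ht] with s hs
  exact (hX.2 s (Ioo_subset_Ico_self hs)).apply_one

theorem hasDerivAt_curveLength (ht : t ∈ Ioo 0 T) :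
    HasDerivAt (fun s => curveLength (X s))
      (∫ u in (0 : ℝ)..1, ⟪mixedDeriv X (t, u), unitTangent (X t) u⟫) t :=
  have hsub : Ioo 0 T ×ˢ univ ⊆ Ico 0 T ×ˢ (univ : Set ℝ) :=
    prod_mono Ioo_subset_Ico_self subset_rfl
  hasDerivAt_parametric_intervalIntegral_of_continuousOn isOpen_Ioo ht
    (F := fun s u => ‖deriv (X s) u‖) (hX.continuousOn_deriv.norm.mono hsub)
    (hX.continuousOn_mixedDeriv.inner (hX.continuousOn_unitTangent.mono hsub))
    (fun s hs u => (hX.hasDerivAt_deriv_time hs u).norm_of_ne_zero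
      ((hX.2 s (Ioo_subset_Ico_self hs)).2.2 u)) 0 1

theorem hasDerivAt_enclosedArea (ht : t ∈ Ioo 0 T) :
    HasDerivAt (fun s => enclosedArea (X s)) ((1 / 2) * ∫ u in (0 : ℝ)..1,
      (⟪X t u, perp (mixedDeriv X (t, u))⟫ + ⟪deriv (fun s => X s u) t, perp (deriv (X t) u)⟫))
      t :=
  have hsub : Ioo 0 T ×ˢ univ ⊆ Ico 0 T ×ˢ (univ : Set ℝ) :=
    prod_mono Ioo_subset_Ico_self subset_rfl
  (hasDerivAt_parametric_intervalIntegral_of_continuousOn isOpen_Ioo ht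
    (F := fun s u => ⟪X s u, perp (deriv (X s) u)⟫)
    ((hX.1.continuousOn.inner (perpL.continuous.comp_continuousOn hX.continuousOn_deriv)).mono hsub)
    ((hX.contDiffOn_interior.continuousOn.inner
      (perpL.continuous.comp_continuousOn hX.continuousOn_mixedDeriv)).add
      (hX.continuousOn_velocity.inner
        (perpL.continuous.comp_continuousOn (hX.continuousOn_deriv.mono hsub))))
    (fun s hs u => (hX.hasDerivAt_time hs u).inner ℝ
      (perpL.hasFDerivAt.comp_hasDerivAt s (hX.hasDerivAt_deriv_time hs u))) 0 1).const_mul _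

end IsSmoothClosedFamily

def averageCurvature (Y : ℝ → E2) : ℝ :=
  (curveLength Y)⁻¹ * ∫ w in (0 : ℝ)..1, curvature Y w * ‖deriv Y w‖

theorem IsSmoothClosedCurve.averageCurvature_mul_curveLength {Y : ℝ → E2}
    (hY : IsSmoothClosedCurve Y) :
    averageCurvature Y * curveLength Y = ∫ w in (0 : ℝ)..1, curvature Y w * ‖deriv Y w‖ := by
  rw [averageCurvature, mul_comm, mul_inv_cancel_left₀ hY.curveLength_pos.ne']

def IsAreaPreservingFlow (T : ℝ) (X : ℝ → ℝ → E2) : Prop :=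
  ∀ t ∈ Ico (0 : ℝ) T, ∀ u : ℝ,
    ⟪derivWithin (fun s => X s u) (Ico 0 T) t, unitNormal (X t) u⟫ =
      -curvature (X t) u + averageCurvature (X t)

namespace IsAreaPreservingFlow

variable {T t : ℝ} {X : ℝ → ℝ → E2} (hflow : IsAreaPreservingFlow T X)
include hflow

theorem inner_velocity_unitNormal (ht : t ∈ Ioo 0 T) (u : ℝ) :
    ⟪deriv (fun s => X s u) t, unitNormal (X t) u⟫ =
      averageCurvature (X t) - curvature (X t) u := by
  rw [← derivWithin_of_mem_nhds (Ico_mem_nhds ht.1 ht.2), hflow t (Ioo_subset_Ico_self ht) u,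
    neg_add_eq_sub]

variable (hX : IsSmoothClosedFamily T X) (ht : t ∈ Ioo 0 T)
include hX ht

theorem length_variation_nonpos :
    ∫ u in (0 : ℝ)..1, ⟪mixedDeriv X (t, u), unitTangent (X t) u⟫ ≤ 0 := by
  have hY := hX.2 t (Ioo_subset_Ico_self ht)
  rw [hY.integral_inner_unitTangent_eq (hX.hasDerivAt_velocity ht) (hX.continuous_mixedDeriv ht)
    (hX.velocity_one ht)]
  simp_rw [hflow.inner_velocity_unitNormal ht]
  exact integral_mul_mul_sub_nonpos_of_weighted_mean zero_le_one hY.continuous_curvature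
    hY.contDiff_deriv.continuous.norm (fun _ => norm_nonneg _) hY.averageCurvature_mul_curveLength

theorem area_variation_eq_zero :
    (1 / 2) * ∫ u in (0 : ℝ)..1, (⟪X t u, perp (mixedDeriv X (t, u))⟫ +
      ⟪deriv (fun s => X s u) t, perp (deriv (X t) u)⟫) = 0 := by
  have hY := hX.2 t (Ioo_subset_Ico_self ht)
  have hρ : Continuous fun u => ‖deriv (X t) u‖ := hY.contDiff_deriv.continuous.norm
  rw [hY.integral_inner_perp_add_eq (hX.hasDerivAt_velocity ht) (hX.continuous_mixedDeriv ht)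
    (hX.velocity_one ht)]
  have hsplit : ∀ u, ‖deriv (X t) u‖ * (averageCurvature (X t) - curvature (X t) u) =
      averageCurvature (X t) * ‖deriv (X t) u‖ - curvature (X t) u * ‖deriv (X t) u‖ :=
    fun u => by ring
  simp_rw [hflow.inner_velocity_unitNormal ht, hsplit]
  rw [intervalIntegral.integral_sub (f := fun u => averageCurvature (X t) * ‖deriv (X t) u‖)
    (g := fun u => curvature (X t) u * ‖deriv (X t) u‖)
    ((continuous_const.mul hρ).intervalIntegrable 0 1)
    ((hY.continuous_curvature.mul hρ).intervalIntegrable 0 1),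
    intervalIntegral.integral_const_mul, ← curveLength, hY.averageCurvature_mul_curveLength,
    sub_self, mul_zero, mul_zero]

end IsAreaPreservingFlow

/-- Under the area-preserving mean-curvature flow with positive initial enclosed area,
the isoperimetric ratio `L²/(4πA)` is non-increasing in time. -/
theorem isoperimetric_ratio_nonincreasing (T : ℝ) (X : ℝ → ℝ → E2)
    (hX : IsSmoothClosedFamily T X)
    (hflow : ∀ t ∈ Ico (0:ℝ) T, ∀ u : ℝ,
      ⟪derivWithin (fun s => X s u) (Ico 0 T) t, unitNormal (X t) u⟫ =
        -curvature (X t) u +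
          (curveLength (X t))⁻¹ * ∫ w in (0:ℝ)..1, curvature (X t) w * ‖deriv (X t) w‖)
    (hA0 : 0 < enclosedArea (X 0)) :
    AntitoneOn (fun t => (curveLength (X t))^2 / (4 * π * enclosedArea (X t))) (Ico 0 T) := by
  have hflow : IsAreaPreservingFlow T X := hflow
  have hL : AntitoneOn (fun t => curveLength (X t)) (Ico 0 T) :=
    antitoneOn_Ico_of_hasDerivAt_nonpos hX.continuousOn_curveLength
      (fun t ht => hX.hasDerivAt_curveLength ht)
      (fun t ht => hflow.length_variation_nonpos hX ht)
  have hA : ∀ t ∈ Ico 0 T, enclosedArea (X t) = enclosedArea (X 0) := fun t ht =>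
    eq_of_hasDerivAt_zero_on_Ioo hX.continuousOn_enclosedArea
      (fun s hs => hflow.area_variation_eq_zero hX hs ▸ hX.hasDerivAt_enclosedArea hs) ht
  intro a ha b hb hab
  dsimp only
  rw [hA a ha, hA b hb]
  exact div_le_div_of_nonneg_right
    (pow_le_pow_left₀ (hX.2 b hb).curveLength_pos.le (hL ha hb hab) 2) (by positivity)
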